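/- Let (I, E) be a finite connected simple graph, Φ : I → ℝ, and let BS(ρ) := Σ_{{i,j}∈E} [ F(ρ_j − ρ_i) + F(ρ_i − ρ_j) − (π/2)(ρ_i + ρ_j) ] + Σ_{i∈I} Φ_i ρ_i with F(x) := ∫_{−∞}^{x} arctan(e^t) dt. Then the Hessian quadratic form of BS at any point ρ satisfies xᵀ BS''(ρ) x = Σ_{{i,j}∈E} (x_j − x_i)² / cosh(ρ_j − ρ_i), and this form is strictly positive for every nonzero x ∈ ℝ^I with Σ_{i∈I} x_i = 0; hence BS is strictly convex on the hyperplane {ρ : Σ_i ρ_i = 0}, and has at most one critical point on this hyperplane. -/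

import Mathlib

noncomputable section

/-- `F x = ∫_{-∞}^x arctan (e^t) dt`. -/
def Fint (x : ℝ) : ℝ := ∫ t in Set.Iio x, Real.arctan (Real.exp t)

/-- The Bobenko–Springborn functional
`BS(ρ) = Σ_{{i,j}∈E} [F(ρ_j-ρ_i) + F(ρ_i-ρ_j) - (π/2)(ρ_i+ρ_j)] + Σ_i Φ_i ρ_i`. -/
def BS {I : Type*} [Fintype I] [DecidableEq I] (G : SimpleGraph I) [DecidableRel G.Adj]
    (Φ : I → ℝ) (ρ : I → ℝ) : ℝ :=
  (∑ e ∈ G.edgeFinset,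
    Sym2.lift
      ⟨fun i j => Fint (ρ j - ρ i) + Fint (ρ i - ρ j) - Real.pi / 2 * (ρ i + ρ j),
       fun i j => by ring⟩ e)
  + ∑ i, Φ i * ρ i

/-!
Along the line `t ↦ ρ + t x`, each edge `{i, j}` contributes `F(s) + F(-s)` with
`s = ρ_j - ρ_i + t (x_j - x_i)`, whose second `t`-derivative is
`(x_j - x_i)² (F''(s) + F''(-s)) = (x_j - x_i)² / cosh s` since `F'' = 1 / (2 cosh)` is even; the
terms that are linear in `ρ` do not contribute. Each summand is nonnegative, and on a connected
graph they all vanish only if `x` is constant, which on the hyperplane `Σ x_i = 0` forces `x = 0`.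
So the second derivative of `BS` along every line inside the hyperplane is positive; this gives
strict convexity there, and two critical points would give a strictly convex function of one
variable with two critical points.
-/

open Real MeasureTheory

lemma arctan_le_self_of_nonneg {x : ℝ} (hx : 0 ≤ x) : arctan x ≤ x := by
  simpa [tan_arctan] using le_tan (arctan_nonneg.2 hx) (arctan_lt_pi_div_two x)

lemma integrableOn_arctan_exp_Iic (x : ℝ) :
    IntegrableOn (fun t => arctan (exp t)) (Set.Iic x) := by
  refine (integrableOn_exp_Iic x).mono' (by fun_prop) (Filter.Eventually.of_forall fun t => ?_)
  rw [norm_of_nonneg (arctan_nonneg.2 (exp_pos t).le)]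
  exact arctan_le_self_of_nonneg (exp_pos t).le

lemma hasDerivAt_Fint (x : ℝ) : HasDerivAt Fint (arctan (exp x)) x := by
  have hcont : Continuous fun t => arctan (exp t) := by fun_prop
  have hshift : (fun y => Fint x + ∫ t in x..y, arctan (exp t)) = Fint := by
    ext y
    rw [← intervalIntegral.integral_Iic_sub_Iic (integrableOn_arctan_exp_Iic x)
      (integrableOn_arctan_exp_Iic y)]
    simp only [Fint, ← integral_Iic_eq_integral_Iio]
    ring
  rw [← hshift]
  exact (intervalIntegral.integral_hasDerivAt_right (hcont.intervalIntegrable x x)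
    (hcont.stronglyMeasurableAtFilter volume _) hcont.continuousAt).const_add _

lemma hasDerivAt_arctan_exp (x : ℝ) :
    HasDerivAt (fun t => arctan (exp t)) (2 * cosh x)⁻¹ x := by
  refine ((hasDerivAt_arctan (exp x)).comp x (hasDerivAt_exp x)).congr_deriv ?_
  rw [cosh_eq, exp_neg]
  field_simp
  ring

lemma deriv_Fint : deriv Fint = fun x => arctan (exp x) :=
  funext fun x => (hasDerivAt_Fint x).deriv

@[fun_prop]
lemma contDiff_Fint : ContDiff ℝ 2 Fint :=
  contDiff_succ_iff_deriv (n := 1).2 ⟨fun x => (hasDerivAt_Fint x).differentiableAt, by simp,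
    by rw [deriv_Fint]; exact contDiff_arctan.comp contDiff_exp⟩

lemma iteratedDeriv_two_Fint (x : ℝ) : iteratedDeriv 2 Fint x = (2 * cosh x)⁻¹ := by
  rw [iteratedDeriv_succ, iteratedDeriv_one, deriv_Fint, (hasDerivAt_arctan_exp x).deriv]

section SecondDerivative

open Set

variable {E : Type*} [NormedAddCommGroup E] [NormedSpace ℝ E] {f : E → ℝ}

lemma iteratedFDeriv_two_comp_clm_apply {φ : ℝ → ℝ} (hφ : ContDiff ℝ 2 φ) (L : E →L[ℝ] ℝ)
    (x v : E) :
    iteratedFDeriv ℝ 2 (fun y => φ (L y)) x ![v, v] = iteratedDeriv 2 φ (L x) * L v ^ 2 := by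
  rw [show (fun y => φ (L y)) = φ ∘ L from rfl, L.iteratedFDeriv_comp_right hφ x le_rfl,
    ContinuousMultilinearMap.compContinuousLinearMap_apply,
    iteratedFDeriv_apply_eq_iteratedDeriv_mul_prod]
  simp [Fin.prod_univ_two, sq, mul_comm]

lemma iteratedFDeriv_two_eq_zero_of_hasFDerivAt {F : Type*} [NormedAddCommGroup F]
    [NormedSpace ℝ F] {g : E → F} {L : E →L[ℝ] F} (hg : ∀ x, HasFDerivAt g L x) (x : E) :
    iteratedFDeriv ℝ 2 g x = 0 := by
  ext m
  rw [iteratedFDeriv_two_apply, show fderiv ℝ g = fun _ => L from funext fun y => (hg y).fderiv]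
  simp

lemma iteratedDeriv_two_comp_line (hf : ContDiff ℝ 2 f) (a v : E) (t : ℝ) :
    iteratedDeriv 2 (fun s => f (a + s • v)) t = iteratedFDeriv ℝ 2 f (a + t • v) ![v, v] := by
  have hfa : ContDiff ℝ 2 (fun y => f (a + y)) := hf.comp (by fun_prop)
  have hline : (fun s : ℝ => f (a + s • v)) =
      (fun y => f (a + y)) ∘ ContinuousLinearMap.toSpanSingleton ℝ v := rfl
  rw [iteratedDeriv_eq_iteratedFDeriv, hline,
    ContinuousLinearMap.iteratedFDeriv_comp_right _ hfa _ le_rfl,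
    ContinuousMultilinearMap.compContinuousLinearMap_apply, iteratedFDeriv_comp_add_left]
  congr 1
  ext k
  fin_cases k <;> simp

lemma strictConvexOn_univ_comp_line (hf : ContDiff ℝ 2 f) {a v : E}
    (hpos : ∀ t : ℝ, 0 < iteratedFDeriv ℝ 2 f (a + t • v) ![v, v]) :
    StrictConvexOn ℝ univ (fun t : ℝ => f (a + t • v)) := by
  have hg : ContDiff ℝ 2 (fun t : ℝ => f (a + t • v)) := by fun_prop
  refine strictConvexOn_univ_of_deriv2_pos hg.continuous fun t => ?_
  rw [← iteratedDeriv_eq_iterate, iteratedDeriv_two_comp_line hf]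
  exact hpos t

variable {s : Set E} (hf : ContDiff ℝ 2 f)
  (hpos : ∀ x, ∀ a ∈ s, ∀ b ∈ s, a ≠ b → 0 < iteratedFDeriv ℝ 2 f x ![b - a, b - a])
include hf hpos

lemma strictConvexOn_of_iteratedFDeriv_two_pos (hs : Convex ℝ s) : StrictConvexOn ℝ s f := by
  refine ⟨hs, fun a ha b hb hab μ ν hμ hν hμν => ?_⟩
  have hline := strictConvexOn_univ_comp_line hf fun t => hpos (a + t • (b - a)) a ha b hb hab
  have key := hline.2 (mem_univ 0) (mem_univ 1) zero_ne_one hμ hν hμν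
  have hpt : a + ν • (b - a) = μ • a + ν • b := by
    rw [eq_sub_of_add_eq hμν, smul_sub, sub_smul, one_smul]
    abel
  simpa only [smul_zero, mul_zero, zero_add, zero_smul, add_zero, smul_eq_mul, mul_one,
    one_smul, add_sub_cancel, hpt] using key

lemma eq_of_fderiv_eq_zero_of_iteratedFDeriv_two_pos {a b : E} (ha : a ∈ s) (hb : b ∈ s)
    (hfa : fderiv ℝ f a = 0) (hfb : fderiv ℝ f b = 0) : a = b := by
  by_contra hab
  have hline := strictConvexOn_univ_comp_line hf fun t => hpos (a + t • (b - a)) a ha b hb hab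
  have hderiv (t : ℝ) : HasDerivAt (fun s : ℝ => f (a + s • (b - a)))
      (fderiv ℝ f (a + t • (b - a)) (b - a)) t := by
    have hl : HasDerivAt (fun s : ℝ => a + s • (b - a)) (b - a) t := by
      simpa using ((hasDerivAt_id t).smul_const (b - a)).const_add a
    exact (hf.differentiable two_ne_zero _).hasFDerivAt.comp_hasDerivAt t hl
  have h0 := hline.lt_slope_of_hasDerivAt (mem_univ 0) (mem_univ 1) zero_lt_one (hderiv 0)
  have h1 := hline.slope_lt_of_hasDerivAt (mem_univ 0) (mem_univ 1) zero_lt_one (hderiv 1)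
  simp only [zero_smul, add_zero, one_smul, add_sub_cancel, hfa, hfb, zero_apply] at h0 h1
  exact lt_asymm h0 h1

end SecondDerivative

theorem SimpleGraph.Connected.apply_eq_of_forall_adj {V α : Type*} {G : SimpleGraph V}
    (hG : G.Connected) {x : V → α} (h : ∀ i j, G.Adj i j → x i = x j) (i j : V) :
    x i = x j := by
  obtain ⟨w⟩ := hG i j
  induction w with
  | nil => rfl
  | cons hadj _ ih => exact (h _ _ hadj).trans ih

theorem SimpleGraph.Connected.exists_adj_ne_of_sum_eq_zero {V : Type*} [Fintype V]
    {G : SimpleGraph V} (hG : G.Connected) {x : V → ℝ} (hx : x ≠ 0) (hsum : ∑ i, x i = 0) :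
    ∃ i j, G.Adj i j ∧ x i ≠ x j := by
  by_contra! hconst
  have : Nonempty V := hG.nonempty
  let i₀ := Classical.arbitrary V
  have hx_eq (i : V) : x i = x i₀ := hG.apply_eq_of_forall_adj hconst i i₀
  have hx₀ : x i₀ = 0 := by
    simpa [hx_eq, Fintype.card_ne_zero] using hsum
  exact hx (funext fun i => by rw [hx_eq, hx₀, Pi.zero_apply])

namespace BS

variable {I : Type*}

def edgeTerm (e : Sym2 I) (ρ : I → ℝ) : ℝ :=
  Sym2.lift
    ⟨fun i j => Fint (ρ j - ρ i) + Fint (ρ i - ρ j) - π / 2 * (ρ i + ρ j), fun i j => by ring⟩ e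

lemma edgeTerm_mk (i j : I) :
    edgeTerm s(i, j) = fun ρ => Fint (ρ j - ρ i) + Fint (ρ i - ρ j) - π / 2 * (ρ i + ρ j) :=
  rfl

variable [Fintype I]

lemma contDiff_edgeTerm (e : Sym2 I) : ContDiff ℝ 2 (edgeTerm e) := by
  induction e using Sym2.ind with
  | _ i j => rw [edgeTerm_mk]; fun_prop

lemma iteratedFDeriv_two_Fint_comp_sub (i j : I) (ρ x : I → ℝ) :
    iteratedFDeriv ℝ 2 (fun ρ : I → ℝ => Fint (ρ j - ρ i)) ρ ![x, x] =
      (x j - x i) ^ 2 / (2 * cosh (ρ j - ρ i)) := by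
  have h := iteratedFDeriv_two_comp_clm_apply contDiff_Fint
    (.proj j - .proj i : (I → ℝ) →L[ℝ] ℝ) ρ x
  simp only [FunLike.coe_sub, Pi.sub_apply, ContinuousLinearMap.proj_apply,
    iteratedDeriv_two_Fint] at h
  rw [h, div_eq_mul_inv, mul_comm]

lemma iteratedFDeriv_two_edgeTerm (i j : I) (ρ x : I → ℝ) :
    iteratedFDeriv ℝ 2 (edgeTerm s(i, j)) ρ ![x, x] = (x j - x i) ^ 2 / cosh (ρ j - ρ i) := by
  have hlin (ρ : I → ℝ) : HasFDerivAt (fun ρ : I → ℝ => π / 2 * (ρ i + ρ j))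
      ((π / 2) • (.proj i + .proj j) : (I → ℝ) →L[ℝ] ℝ) ρ :=
    ((π / 2) • (.proj i + .proj j) : (I → ℝ) →L[ℝ] ℝ).hasFDerivAt
  rw [edgeTerm_mk, fun_iteratedFDeriv_sub_apply (by fun_prop) (by fun_prop),
    fun_iteratedFDeriv_add_apply (by fun_prop) (by fun_prop),
    iteratedFDeriv_two_eq_zero_of_hasFDerivAt hlin]
  simp only [add_apply, sub_apply, zero_apply, iteratedFDeriv_two_Fint_comp_sub]
  rw [← neg_sub (ρ j), cosh_neg, ← neg_sub (x j), neg_sq]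
  ring

variable (G : SimpleGraph I) [DecidableRel G.Adj]

def hessian (ρ x : I → ℝ) : ℝ :=
  ∑ e ∈ G.edgeFinset,
    Sym2.lift
      ⟨fun i j => (x j - x i) ^ 2 / cosh (ρ j - ρ i), fun i j => by
        dsimp only
        rw [← neg_sub (ρ i), cosh_neg, ← neg_sub (x i), neg_sq]⟩ e

lemma hessian_pos (hG : G.Connected) (ρ : I → ℝ) {x : I → ℝ} (hx : x ≠ 0)
    (hsum : ∑ i, x i = 0) : 0 < hessian G ρ x := by
  obtain ⟨i, j, hadj, hne⟩ := hG.exists_adj_ne_of_sum_eq_zero hx hsum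
  have hji : x j - x i ≠ 0 := sub_ne_zero.2 hne.symm
  refine Finset.sum_pos' (fun e _ => ?_) ⟨s(i, j), G.mem_edgeFinset.2 hadj, ?_⟩
  · induction e using Sym2.ind with
    | _ k l => rw [Sym2.lift_mk]; positivity
  · rw [Sym2.lift_mk]
    positivity

variable (Φ : I → ℝ)

lemma hasFDerivAt_potential (ρ : I → ℝ) :
    HasFDerivAt (fun ρ : I → ℝ => ∑ i, Φ i * ρ i) (∑ i, Φ i • .proj i : (I → ℝ) →L[ℝ] ℝ) ρ :=
  .fun_sum fun i _ => (hasFDerivAt_apply i ρ).const_mul (Φ i)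

variable [DecidableEq I]

lemma contDiff : ContDiff ℝ 2 (BS G Φ) :=
  .add (.sum fun e _ => contDiff_edgeTerm e) (by fun_prop)

lemma iteratedFDeriv_two (ρ x : I → ℝ) :
    iteratedFDeriv ℝ 2 (BS G Φ) ρ ![x, x] = hessian G ρ x := by
  change iteratedFDeriv ℝ 2 (fun ρ => ∑ e ∈ G.edgeFinset, edgeTerm e ρ + ∑ i, Φ i * ρ i) ρ _ = _
  rw [fun_iteratedFDeriv_add_apply (ContDiff.sum fun e _ => contDiff_edgeTerm e).contDiffAt
      (by fun_prop), iteratedFDeriv_two_eq_zero_of_hasFDerivAt (hasFDerivAt_potential Φ),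
    iteratedFDeriv_fun_sum_apply fun e _ => (contDiff_edgeTerm e).contDiffAt]
  simp only [add_zero, sum_apply]
  refine Finset.sum_congr rfl fun e _ => ?_
  induction e using Sym2.ind with
  | _ i j => exact iteratedFDeriv_two_edgeTerm i j ρ x

end BS

/-- The Hessian quadratic form of `BS` is
`xᵀ BS''(ρ) x = Σ_{{i,j}∈E} (x_j - x_i)² / cosh (ρ_j - ρ_i)`; it is positive on nonzero
vectors with coordinate sum 0 when the graph is connected, so `BS` is strictly convex on
the hyperplane `Σ_i ρ_i = 0` and has at most one critical point there. -/
theorem BS_hessian_strictConvex {I : Type*} [Fintype I] [DecidableEq I]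
    (G : SimpleGraph I) [DecidableRel G.Adj] (hconn : G.Connected) (Φ : I → ℝ) :
    (∀ ρ x : I → ℝ,
      iteratedFDeriv ℝ 2 (BS G Φ) ρ ![x, x] =
        ∑ e ∈ G.edgeFinset,
          Sym2.lift
            ⟨fun i j => (x j - x i) ^ 2 / Real.cosh (ρ j - ρ i),
             fun i j => by
              show (x j - x i) ^ 2 / Real.cosh (ρ j - ρ i)
                  = (x i - x j) ^ 2 / Real.cosh (ρ i - ρ j)
              have h2 : Real.cosh (ρ j - ρ i) = Real.cosh (ρ i - ρ j) := by
                rw [← Real.cosh_abs, abs_sub_comm, Real.cosh_abs]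
              rw [h2]; ring⟩ e) ∧
    (∀ ρ x : I → ℝ, x ≠ 0 → ∑ i, x i = 0 →
      0 < iteratedFDeriv ℝ 2 (BS G Φ) ρ ![x, x]) ∧
    StrictConvexOn ℝ {ρ : I → ℝ | ∑ i, ρ i = 0} (BS G Φ) ∧
    (∀ ρ₁ ρ₂ : I → ℝ, ∑ i, ρ₁ i = 0 → ∑ i, ρ₂ i = 0 →
      fderiv ℝ (BS G Φ) ρ₁ = 0 → fderiv ℝ (BS G Φ) ρ₂ = 0 → ρ₁ = ρ₂) := by
  have hplane : Convex ℝ {ρ : I → ℝ | ∑ i, ρ i = 0} :=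
    convex_hyperplane ⟨fun _ _ => Finset.sum_add_distrib, fun _ _ => (Finset.mul_sum ..).symm⟩ 0
  have hpos (ρ x : I → ℝ) (hx : x ≠ 0) (hsum : ∑ i, x i = 0) :
      0 < iteratedFDeriv ℝ 2 (BS G Φ) ρ ![x, x] :=
    BS.iteratedFDeriv_two G Φ ρ x ▸ BS.hessian_pos G hconn ρ hx hsum
  have hpos_plane : ∀ ρ, ∀ a ∈ {ρ : I → ℝ | ∑ i, ρ i = 0}, ∀ b ∈ {ρ : I → ℝ | ∑ i, ρ i = 0},
      a ≠ b → 0 < iteratedFDeriv ℝ 2 (BS G Φ) ρ ![b - a, b - a] := by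
    intro ρ a (ha : ∑ i, a i = 0) b (hb : ∑ i, b i = 0) hab
    refine hpos ρ _ (sub_ne_zero.2 hab.symm) ?_
    simp only [Pi.sub_apply, Finset.sum_sub_distrib, ha, hb, sub_zero]
  exact ⟨BS.iteratedFDeriv_two G Φ, hpos,
    strictConvexOn_of_iteratedFDeriv_two_pos (BS.contDiff G Φ) hpos_plane hplane,
    fun _ _ h₁ h₂ =>
      eq_of_fderiv_eq_zero_of_iteratedFDeriv_two_pos (BS.contDiff G Φ) hpos_plane h₁ h₂⟩
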